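/- Let r be an integer and m, d positive integers with gcd(m,d) = 1, and let λ ∈ {0,…,d-1} satisfy r + λm ≡ 0 (mod d). Then for all natural numbers s and t with 0 ≤ t ≤ d-1, (q^r;q^m)_{sd+t} / (q^m;q^m)_{sd+t} ≡ [((r+λm)/(md))_s / (1)_s] · (q^r;q^m)_t / (q^m;q^m)_t modulo Φ_d(q), where (x)_s = x(x+1)⋯(x+s-1) is the rising Pochhammer symbol. -/

import Mathlib

open Polynomial Finset

/-!
At a primitive `d`-th root of unity `ζ`, the factor `1 - q^e` vanishes exactly when `d ∣ e`.
Cut `(q^r;q^m)_{sd+t}/(q^m;q^m)_{sd+t}` into `s` blocks of length `d` and a tail of length `t`.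
In each block exactly one numerator factor `1 - q^{dA}` and one denominator factor `1 - q^{dB}`
vanish at `ζ`; their quotient is `(1 + y + ⋯ + y^{A-1})/(1 + y + ⋯ + y^{B-1})` with `y = q^d`,
which takes the value `A/B` at `ζ`. Since `m` is prime to `d`, the remaining `d - 1` factors of
either product take the values `1 - ω` for the `d`-th roots of unity `ω ≠ 1`, whose product is `d`,
so they cancel. The `k`-th block contributes `(c + km)/(m(k + 1))`, where `r + λm = dc`, and these
multiply to `((r+λm)/(md))_s / s!`. The tail has no vanishing denominator factor and has the same
value as `(q^r;q^m)_t/(q^m;q^m)_t`. Two rational functions regular at `ζ` with the same value there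
are congruent modulo the minimal polynomial `Φ_d` of `ζ`.
-/

namespace RatFunc

variable {K L : Type*} [Field K] [Field L] [Algebra K L] {ζ v w : L} {x y : RatFunc K}

def HasValueAt (x : RatFunc K) (ζ v : L) : Prop :=
  ∃ p q : K[X], aeval ζ q ≠ 0 ∧
    x = algebraMap K[X] (RatFunc K) p / algebraMap K[X] (RatFunc K) q ∧
    v = aeval ζ p / aeval ζ q

theorem algebraMap_ne_zero_of_aeval_ne_zero {q : K[X]} (hq : aeval ζ q ≠ 0) :
    algebraMap K[X] (RatFunc K) q ≠ 0 :=
  algebraMap_ne_zero (by rintro rfl; simp at hq)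

theorem hasValueAt_algebraMap (ζ : L) (p : K[X]) :
    HasValueAt (algebraMap K[X] (RatFunc K) p) ζ (aeval ζ p) :=
  ⟨p, 1, by simp, by simp, by simp⟩

theorem hasValueAt_C (ζ : L) (k : K) : HasValueAt (C k) ζ (algebraMap K L k) := by
  simpa using hasValueAt_algebraMap ζ (Polynomial.C k)

theorem hasValueAt_X (ζ : L) : HasValueAt (X : RatFunc K) ζ ζ := by
  simpa using hasValueAt_algebraMap ζ (Polynomial.X : K[X])

namespace HasValueAt

theorem mul (hx : HasValueAt x ζ v) (hy : HasValueAt y ζ w) : HasValueAt (x * y) ζ (v * w) := by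
  obtain ⟨p, q, hq, rfl, rfl⟩ := hx
  obtain ⟨p', q', hq', rfl, rfl⟩ := hy
  exact ⟨p * p', q * q', by simpa using mul_ne_zero hq hq', by simp [div_mul_div_comm],
    by simp [div_mul_div_comm]⟩

theorem add (hx : HasValueAt x ζ v) (hy : HasValueAt y ζ w) : HasValueAt (x + y) ζ (v + w) := by
  obtain ⟨p, q, hq, rfl, rfl⟩ := hx
  obtain ⟨p', q', hq', rfl, rfl⟩ := hy
  refine ⟨p * q' + q * p', q * q', by simpa using mul_ne_zero hq hq', ?_, by
    simp [div_add_div _ _ hq hq']⟩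
  simp [div_add_div _ _ (algebraMap_ne_zero_of_aeval_ne_zero hq)
    (algebraMap_ne_zero_of_aeval_ne_zero hq')]

theorem neg (hx : HasValueAt x ζ v) : HasValueAt (-x) ζ (-v) := by
  obtain ⟨p, q, hq, rfl, rfl⟩ := hx
  exact ⟨-p, q, hq, by simp [neg_div], by simp [neg_div]⟩

theorem sub (hx : HasValueAt x ζ v) (hy : HasValueAt y ζ w) : HasValueAt (x - y) ζ (v - w) := by
  simpa only [sub_eq_add_neg] using hx.add hy.neg

theorem inv (hx : HasValueAt x ζ v) (hv : v ≠ 0) : HasValueAt x⁻¹ ζ v⁻¹ := by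
  obtain ⟨p, q, hq, rfl, rfl⟩ := hx
  exact ⟨q, p, left_ne_zero_of_mul (by simpa [div_eq_mul_inv] using hv), by rw [inv_div],
    by rw [inv_div]⟩

theorem div (hx : HasValueAt x ζ v) (hy : HasValueAt y ζ w) (hw : w ≠ 0) :
    HasValueAt (x / y) ζ (v / w) := by
  simpa only [div_eq_mul_inv] using hx.mul (hy.inv hw)

theorem pow (hx : HasValueAt x ζ v) (n : ℕ) : HasValueAt (x ^ n) ζ (v ^ n) := by
  induction n with
  | zero => simpa using hasValueAt_C ζ (1 : K)
  | succ n ih => simpa only [pow_succ] using ih.mul hx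

theorem zpow (hx : HasValueAt x ζ v) (hv : v ≠ 0) (n : ℤ) : HasValueAt (x ^ n) ζ (v ^ n) := by
  cases n with
  | ofNat n => simpa using hx.pow n
  | negSucc n => simpa using (hx.pow (n + 1)).inv (pow_ne_zero _ hv)

theorem exists_sub_mul_eq_minpoly_mul (hx : HasValueAt x ζ v) (hy : HasValueAt y ζ v) :
    ∃ a b : K[X], ¬ minpoly K ζ ∣ b ∧
      (x - y) * algebraMap K[X] (RatFunc K) b = algebraMap K[X] (RatFunc K) (minpoly K ζ * a) := by
  obtain ⟨p, q, hq, hpq, hp⟩ := hx.sub hy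
  obtain ⟨a, rfl⟩ := minpoly.dvd K ζ (by simpa [hq] using hp.symm)
  exact ⟨a, q, fun h => hq (minpoly.dvd_iff.mp h),
    hpq ▸ div_mul_cancel₀ _ (algebraMap_ne_zero_of_aeval_ne_zero hq)⟩

end HasValueAt

theorem hasValueAt_prod {ι : Type*} (s : Finset ι) {f : ι → RatFunc K} {g : ι → L}
    (h : ∀ i ∈ s, HasValueAt (f i) ζ (g i)) : HasValueAt (∏ i ∈ s, f i) ζ (∏ i ∈ s, g i) := by
  classical
  induction s using Finset.induction_on with
  | empty => simpa using hasValueAt_C ζ (1 : K)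
  | insert i s hi ih =>
    rw [prod_insert hi, prod_insert hi]
    exact (h i (mem_insert_self i s)).mul (ih fun j hj => h j (mem_insert_of_mem hj))

theorem hasValueAt_one_sub_X_zpow (hζ : ζ ≠ 0) (e : ℤ) :
    HasValueAt (1 - X ^ e : RatFunc K) ζ (1 - ζ ^ e) := by
  simpa using (hasValueAt_C ζ (1 : K)).sub ((hasValueAt_X ζ).zpow hζ e)

theorem X_zpow_natCast_ne_one {d : ℕ} (hd : d ≠ 0) : (X : RatFunc K) ^ (d : ℤ) ≠ 1 := by
  intro h
  have h' : (Polynomial.X ^ d : K[X]) = 1 := algebraMap_injective K (by simpa using h)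
  exact X_pow_sub_C_ne_zero (Nat.pos_of_ne_zero hd) (1 : K) (by simp [h'])

theorem hasValueAt_one_sub_zpow_div_one_sub (hy : HasValueAt y ζ 1) (hy0 : y ≠ 0) (hy1 : y ≠ 1)
    (A : ℤ) : HasValueAt ((1 - y ^ A) / (1 - y)) ζ A := by
  have h1y : 1 - y ≠ 0 := sub_ne_zero.mpr hy1.symm
  have hpow (A : ℤ) : HasValueAt (y ^ A) ζ 1 := by simpa using hy.zpow one_ne_zero A
  induction A using Int.induction_on with
  | zero => simpa using hasValueAt_C ζ (0 : K)
  | succ A ih =>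
    have h : (1 - y ^ ((A : ℤ) + 1)) / (1 - y) = (1 - y ^ (A : ℤ)) / (1 - y) + y ^ (A : ℤ) := by
      rw [zpow_add_one₀ hy0]; field_simp; ring
    simpa [h] using ih.add (hpow A)
  | pred A ih =>
    have h : (1 - y ^ (-(A : ℤ) - 1)) / (1 - y)
        = (1 - y ^ (-(A : ℤ))) / (1 - y) - y ^ (-(A : ℤ) - 1) := by
      rw [zpow_sub_one₀ hy0]; field_simp; ring
    simpa [h] using ih.sub (hpow (-A - 1))

theorem hasValueAt_one_sub_zpow_div_one_sub_zpow (hy : HasValueAt y ζ 1) (hy0 : y ≠ 0)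
    (hy1 : y ≠ 1) (A : ℤ) {B : ℤ} (hB : (B : L) ≠ 0) :
    HasValueAt ((1 - y ^ A) / (1 - y ^ B)) ζ (A / B) := by
  have h := (hasValueAt_one_sub_zpow_div_one_sub hy hy0 hy1 A).div
    (hasValueAt_one_sub_zpow_div_one_sub hy hy0 hy1 B) hB
  rwa [div_div_div_cancel_right₀ (sub_ne_zero.mpr hy1.symm)] at h

end RatFunc

theorem IsPrimitiveRoot.prod_erase_one_sub_mul_pow {R : Type*} [CommRing R] [IsDomain R]
    {μ α : R} {d k : ℕ} (hμ : IsPrimitiveRoot μ d) (hk : k < d) (hα : α * μ ^ k = 1) :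
    ∏ i ∈ (range d).erase k, (1 - α * μ ^ i) = d := by
  have hαd : α ^ d = 1 := by
    simpa [mul_pow, ← pow_mul, pow_mul', hμ.pow_eq_one] using congrArg (· ^ d) hα
  have h := X_pow_sub_C_eq_prod hμ (by omega) hαd
  rw [← mul_prod_erase _ _ (mem_range.mpr hk), mul_comm (μ ^ k), hα, C_1, ← mul_geom_sum] at h
  replace h := mul_left_cancel₀ (by simpa using X_sub_C_ne_zero (1 : R)) h
  apply_fun Polynomial.eval 1 at h
  simpa [eval_prod, eval_geom_sum, mul_comm α] using h.symm

theorem prod_add_div_factorial {F : Type*} [Field F] (x : F) (s : ℕ) :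
    (∏ i ∈ range s, (x + i)) / s.factorial = ∏ i ∈ range s, (x + i) / (i + 1) := by
  rw [← prod_range_add_one_eq_factorial, Nat.cast_prod, ← prod_div_distrib]
  push_cast
  rfl

section QPochhammer

open RatFunc

variable {K L : Type*} [Field K]

noncomputable def qPochhammer (a : ℤ) (m n : ℕ) : RatFunc K :=
  ∏ j ∈ range n, (1 - RatFunc.X ^ (a + j * m))

theorem qPochhammer_add (a : ℤ) (m p n : ℕ) :
    (qPochhammer a m (p + n) : RatFunc K) = qPochhammer a m p * qPochhammer (a + p * m) m n := by
  simp only [qPochhammer, prod_range_add]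
  congr! 4
  push_cast
  ring

theorem qPochhammer_natCast_self (m n : ℕ) :
    (qPochhammer m m n : RatFunc K) = ∏ j ∈ range n, (1 - RatFunc.X ^ ((m : ℤ) * (j + 1))) :=
  prod_congr rfl fun j _ => by ring_nf

variable [Field L] [Algebra K L] {ζ : L} {d m : ℕ}

theorem hasValueAt_qPochhammer (hζ : ζ ≠ 0) {a e : ℤ} (he : ζ ^ e = 1) (n : ℕ) :
    HasValueAt (qPochhammer (a + e) m n : RatFunc K) ζ (∏ j ∈ range n, (1 - ζ ^ (a + j * m))) := by
  refine hasValueAt_prod _ fun j _ => ?_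
  simpa [zpow_add₀ hζ, he, add_right_comm a e] using
    hasValueAt_one_sub_X_zpow (K := K) hζ (a + e + j * m)

theorem hasValueAt_prod_erase_one_sub_X_zpow (hζ : IsPrimitiveRoot ζ d) (hcop : m.Coprime d)
    {e E : ℤ} {k : ℕ} (hk : k < d) (he : e + k * m = d * E) :
    HasValueAt (∏ i ∈ (range d).erase k, (1 - RatFunc.X ^ (e + i * m)) : RatFunc K) ζ d := by
  have hζ0 : ζ ≠ 0 := hζ.ne_zero (by omega)
  have hα : ζ ^ e * (ζ ^ m) ^ k = 1 := by
    rw [← pow_mul, ← zpow_natCast, ← zpow_add₀ hζ0, Nat.cast_mul, mul_comm (m : ℤ), he, zpow_mul,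
      zpow_natCast, hζ.pow_eq_one, one_zpow]
  rw [← (hζ.pow_of_coprime m hcop).prod_erase_one_sub_mul_pow hk hα]
  refine hasValueAt_prod _ fun i _ => ?_
  convert hasValueAt_one_sub_X_zpow hζ0 (e + i * m) using 2
  rw [zpow_add₀ hζ0, ← pow_mul, ← zpow_natCast, mul_comm m, Nat.cast_mul]

theorem hasValueAt_qPochhammer_div_qPochhammer_period [CharZero L] (hζ : IsPrimitiveRoot ζ d)
    (hcop : m.Coprime d) {a b A B : ℤ} {k l : ℕ} (hk : k < d) (hl : l < d)
    (ha : a + k * m = d * A) (hb : b + l * m = d * B) (hB : B ≠ 0) :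
    HasValueAt (qPochhammer a m d / qPochhammer b m d : RatFunc K) ζ (A / B) := by
  have hd : d ≠ 0 := by omega
  have hζ0 : ζ ≠ 0 := hζ.ne_zero hd
  have hy : HasValueAt (RatFunc.X ^ (d : ℤ) : RatFunc K) ζ 1 := by
    simpa [hζ.pow_eq_one] using (hasValueAt_X ζ).zpow hζ0 d
  have hsing := hasValueAt_one_sub_zpow_div_one_sub_zpow hy (zpow_ne_zero _ RatFunc.X_ne_zero)
    (X_zpow_natCast_ne_one hd) A (Int.cast_ne_zero.mpr hB)
  have hreg := (hasValueAt_prod_erase_one_sub_X_zpow (K := K) hζ hcop hk ha).div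
    (hasValueAt_prod_erase_one_sub_X_zpow hζ hcop hl hb) (Nat.cast_ne_zero.mpr hd)
  rw [qPochhammer, qPochhammer, ← mul_prod_erase (range d) _ (mem_range.mpr hk),
    ← mul_prod_erase (range d) _ (mem_range.mpr hl), ha, hb, zpow_mul, zpow_mul, mul_div_mul_comm,
    ← mul_one (A / B : L), ← div_self (Nat.cast_ne_zero.mpr hd : (d : L) ≠ 0)]
  exact hsing.mul hreg

theorem hasValueAt_qPochhammer_div_qPochhammer_mul_period [CharZero L]
    (hζ : IsPrimitiveRoot ζ d) (hcop : m.Coprime d) (hm : 0 < m) {r c : ℤ} {k : ℕ} (hk : k < d)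
    (hc : r + k * m = d * c) (s : ℕ) :
    HasValueAt (qPochhammer r m (s * d) / qPochhammer m m (s * d) : RatFunc K) ζ
      ((∏ i ∈ range s, (c / m + i) / (i + 1) : ℚ) : L) := by
  induction s with
  | zero => simpa [qPochhammer] using hasValueAt_C ζ (1 : K)
  | succ s ih =>
    rw [add_one_mul, qPochhammer_add, qPochhammer_add, mul_div_mul_comm, prod_range_succ,
      Rat.cast_mul]
    refine ih.mul ?_
    have hblock := hasValueAt_qPochhammer_div_qPochhammer_period (K := K) hζ hcop hk
      (Nat.sub_lt (by omega) one_pos) (a := r + (s * d : ℕ) * m) (b := m + (s * d : ℕ) * m)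
      (A := c + s * m) (B := m * (s + 1)) (by push_cast; linear_combination hc)
      (by push_cast [Nat.cast_sub (by omega : 1 ≤ d)]; ring) (by positivity)
    convert hblock using 1
    have : (m : L) ≠ 0 := Nat.cast_ne_zero.mpr hm.ne'
    push_cast
    field_simp

theorem hasValueAt_qPochhammer_div_qPochhammer_of_lt (hζ : IsPrimitiveRoot ζ d)
    (hcop : m.Coprime d) {t : ℕ} (ht : t < d) (r : ℤ) {e : ℤ} (he : (d : ℤ) ∣ e) :
    HasValueAt (qPochhammer (r + e) m t / qPochhammer (m + e) m t : RatFunc K) ζ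
      ((∏ j ∈ range t, (1 - ζ ^ (r + j * m))) / ∏ j ∈ range t, (1 - ζ ^ ((m : ℤ) + j * m))) := by
  have hζ0 : ζ ≠ 0 := hζ.ne_zero (by omega)
  have hζe : ζ ^ e = 1 := (hζ.zpow_eq_one_iff_dvd e).mpr he
  refine (hasValueAt_qPochhammer hζ0 hζe t).div (hasValueAt_qPochhammer hζ0 hζe t) ?_
  refine prod_ne_zero_iff.mpr fun j hj => sub_ne_zero.mpr fun h => ?_
  have hdvd : d ∣ m * (j + 1) := (hζ.pow_eq_one_iff_dvd _).mp (by
    rw [← zpow_natCast, h]; push_cast; ring_nf)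
  have := Nat.le_of_dvd (by omega) (hcop.symm.dvd_of_dvd_mul_left hdvd)
  have := mem_range.mp hj
  omega

end QPochhammer

theorem qLucas_congr_cyclotomic (r : ℤ) (m d : ℕ) (hm : 0 < m) (hd : 0 < d)
    (hcop : Nat.Coprime m d) (lam : ℕ) (hlam : lam < d)
    (hdvd : (d : ℤ) ∣ r + lam * m) (s t : ℕ) (ht : t ≤ d - 1) :
    ∃ a b : Polynomial ℚ, ¬ Polynomial.cyclotomic d ℚ ∣ b ∧
      ((∏ j ∈ Finset.range (s * d + t), (1 - (RatFunc.X : RatFunc ℚ) ^ (r + (j : ℤ) * m)))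
          / (∏ j ∈ Finset.range (s * d + t), (1 - (RatFunc.X : RatFunc ℚ) ^ ((m : ℤ) * (j + 1))))
        - RatFunc.C ((∏ i ∈ Finset.range s, (((r : ℚ) + lam * m) / (m * d) + i))
              / (Nat.factorial s : ℚ))
            * ((∏ j ∈ Finset.range t, (1 - (RatFunc.X : RatFunc ℚ) ^ (r + (j : ℤ) * m)))
              / (∏ j ∈ Finset.range t, (1 - (RatFunc.X : RatFunc ℚ) ^ ((m : ℤ) * (j + 1))))))
          * algebraMap (Polynomial ℚ) (RatFunc ℚ) b
        = algebraMap (Polynomial ℚ) (RatFunc ℚ) (Polynomial.cyclotomic d ℚ * a) := by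
  obtain ⟨c, hc⟩ := hdvd
  have hζ := Complex.isPrimitiveRoot_exp d hd.ne'
  have htd : t < d := by omega
  have hx : ((r : ℚ) + lam * m) / (m * d) = c / m := by
    rw [show (r : ℚ) + lam * m = d * c by exact_mod_cast hc]
    field_simp
  rw [hx, prod_add_div_factorial, ← qPochhammer_natCast_self, ← qPochhammer_natCast_self]
  have hL := (hasValueAt_qPochhammer_div_qPochhammer_mul_period (K := ℚ) hζ hcop hm hlam hc s).mul
    (hasValueAt_qPochhammer_div_qPochhammer_of_lt hζ hcop htd r (e := (s * d : ℕ) * m)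
      ⟨s * m, by push_cast; ring⟩)
  rw [← mul_div_mul_comm, ← qPochhammer_add, ← qPochhammer_add] at hL
  have hR := (RatFunc.hasValueAt_C _ (∏ i ∈ range s, ((c / m + i) / (i + 1) : ℚ))).mul (by
    simpa only [add_zero] using
      hasValueAt_qPochhammer_div_qPochhammer_of_lt (K := ℚ) hζ hcop htd r (dvd_zero _))
  rw [eq_ratCast (algebraMap ℚ ℂ)] at hR
  rw [cyclotomic_eq_minpoly_rat hζ hd]
  exact hL.exists_sub_mul_eq_minpoly_mul hR
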